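/- arXiv:2603.21591 — 4 statements merged into one kernel-verified Lean document; each statement's English description precedes it below -/
import Mathlib

section
/- Let ℓ ≥ 3 and let μ₀, μ₁, μ₂ be nonnegative integers with min(μ₀+1,ℓ) + min(μ₁+1,ℓ) + min(μ₂+1,ℓ) ≥ 2ℓ + 1. For μ ≥ 0 let I(μ) be the set of residues mod 2ℓ of integers t with −μ ≤ t ≤ μ, t ≡ μ (mod 2). Then for any c₁, c₂ ∈ ZMod (2ℓ) such that the three sets I(μ₀), I(μ₁)+c₁, I(μ₂)+c₂ all lie in a common coset (of cardinality ℓ) of the subgroup of even residues, i.e. all their elements are congruent mod 2, these three sets have a common element. -/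
/-- `I ℓ μ` is the set of residues mod `2ℓ` of integers `t` with `-μ ≤ t ≤ μ`
and `t ≡ μ (mod 2)`. -/
def resSet (ℓ μ : ℕ) : Set (ZMod (2 * ℓ)) :=
  {x | ∃ t : ℤ, -(μ : ℤ) ≤ t ∧ t ≤ (μ : ℤ) ∧ t ≡ (μ : ℤ) [ZMOD 2] ∧ x = (t : ZMod (2 * ℓ))}

lemma resSet_ncard_lb (ℓ μ : ℕ) (hℓ : 3 ≤ ℓ) :
    min (μ + 1) ℓ ≤ (resSet ℓ μ).ncard := by
  haveI : NeZero (2 * ℓ) := ⟨by omega⟩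
  set m := min (μ + 1) ℓ with hm
  set f : Fin m → ZMod (2 * ℓ) := fun k => (((μ : ℤ) - 2 * k : ℤ) : ZMod (2 * ℓ)) with hf
  have hinj : Function.Injective f := by
    intro k k' h
    have := (ZMod.intCast_eq_intCast_iff _ _ _).mp h
    have hdvd : ((2 * ℓ : ℕ) : ℤ) ∣ ((μ : ℤ) - 2 * k') - ((μ : ℤ) - 2 * k) :=
      Int.ModEq.dvd this
    have hdvd2 : (ℓ : ℤ) ∣ ((k : ℤ) - k') := by
      have h2 : ((2 * ℓ : ℕ) : ℤ) = 2 * ℓ := by push_cast; ring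
      rw [h2] at hdvd
      have : 2 * (ℓ : ℤ) ∣ 2 * ((k : ℤ) - k') := by
        convert hdvd using 1; ring
      exact (mul_dvd_mul_iff_left (by norm_num : (2:ℤ) ≠ 0)).mp this
    have hk := k.2
    have hk' := k'.2
    have hmℓ : m ≤ ℓ := min_le_right _ _
    have habs : |(k : ℤ) - k'| < (ℓ : ℤ) := by
      rw [abs_lt]; constructor <;> [skip; skip] <;> push_cast <;> omega
    have := Int.eq_zero_of_abs_lt_dvd hdvd2 habs
    ext
    omega
  have hsub : Set.range f ⊆ resSet ℓ μ := by
    rintro x ⟨k, rfl⟩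
    refine ⟨(μ : ℤ) - 2 * k, ?_, ?_, ?_, rfl⟩
    · have hk := k.2
      have : m ≤ μ + 1 := min_le_left _ _
      push_cast; omega
    · push_cast; omega
    · exact (Int.modEq_iff_dvd.mpr ⟨k, by ring⟩)
  calc m = (Set.range f).ncard := by
        rw [← Set.image_univ, Set.ncard_image_of_injective _ hinj, Set.ncard_univ,
          Nat.card_eq_fintype_card, Fintype.card_fin]
    _ ≤ (resSet ℓ μ).ncard := Set.ncard_le_ncard hsub (Set.toFinite _)

theorem stmt_3 (ℓ : ℕ) (hℓ : 3 ≤ ℓ) (μ₀ μ₁ μ₂ : ℕ) (c₁ c₂ : ZMod (2 * ℓ))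
    (hsum : 2 * ℓ - 2 ≤ μ₀ + μ₁ + μ₂)
    (hmin : 2 * ℓ + 1 ≤ min (μ₀ + 1) ℓ + min (μ₁ + 1) ℓ + min (μ₂ + 1) ℓ)
    (hcoset : (resSet ℓ μ₀ ∪ ((· + c₁) '' resSet ℓ μ₁) ∪ ((· + c₂) '' resSet ℓ μ₂)).ncard ≤ ℓ) :
    (resSet ℓ μ₀ ∩ ((· + c₁) '' resSet ℓ μ₁) ∩ ((· + c₂) '' resSet ℓ μ₂)).Nonempty := by
  haveI : NeZero (2 * ℓ) := ⟨by omega⟩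
  set A := resSet ℓ μ₀
  set B := (· + c₁) '' resSet ℓ μ₁
  set C := (· + c₂) '' resSet ℓ μ₂
  have hB : min (μ₁ + 1) ℓ ≤ B.ncard := by
    rw [Set.ncard_image_of_injective _ (add_left_injective c₁)]
    exact resSet_ncard_lb ℓ μ₁ hℓ
  have hC : min (μ₂ + 1) ℓ ≤ C.ncard := by
    rw [Set.ncard_image_of_injective _ (add_left_injective c₂)]
    exact resSet_ncard_lb ℓ μ₂ hℓ
  have hA : min (μ₀ + 1) ℓ ≤ A.ncard := resSet_ncard_lb ℓ μ₀ hℓ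
  have h1 : (A ∪ B).ncard + (A ∩ B).ncard = A.ncard + B.ncard :=
    Set.ncard_union_add_ncard_inter A B (Set.toFinite _) (Set.toFinite _)
  have h2 : ((A ∩ B) ∪ C).ncard + ((A ∩ B) ∩ C).ncard = (A ∩ B).ncard + C.ncard :=
    Set.ncard_union_add_ncard_inter _ _ (Set.toFinite _) (Set.toFinite _)
  have hub1 : (A ∪ B).ncard ≤ ℓ := by
    refine le_trans (Set.ncard_le_ncard ?_ (Set.toFinite _)) hcoset
    exact fun x hx => Or.inl hx
  have hub2 : ((A ∩ B) ∪ C).ncard ≤ ℓ := by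
    refine le_trans (Set.ncard_le_ncard ?_ (Set.toFinite _)) hcoset
    rintro x (⟨hx, -⟩ | hx)
    · exact Or.inl (Or.inl hx)
    · exact Or.inr hx
  have : 1 ≤ ((A ∩ B) ∩ C).ncard := by omega
  exact Set.nonempty_of_ncard_ne_zero (by omega)
end

section
/- Let ℓ ≥ 3 and let G be a multigraph on 4 vertices with e(G) = 3ℓ − 3, such that d(S) = 2ℓ − 2 for every 2-element vertex subset S and d(v) ≡ ℓ (mod 2) for every vertex v. Then G admits no orientation D with d⁺_D(v) − d⁻_D(v) ≡ ℓ (mod 2ℓ) for every vertex v. -/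
theorem stmt_14 (ℓ : ℕ) (hℓ : 3 ≤ ℓ) (μ : Fin 4 → Fin 4 → ℕ)
    (hsymm : ∀ x y, μ x y = μ y x) (hloop : ∀ x, μ x x = 0)
    (hedges : ∑ x, ∑ y, μ x y = 2 * (3 * ℓ - 3))
    (hcut : ∀ S : Finset (Fin 4), S.card = 2 → ∑ x ∈ S, ∑ y ∈ Sᶜ, μ x y = 2 * ℓ - 2)
    (hdegpar : ∀ v : Fin 4, ((∑ y, μ v y : ℕ) : ℤ) ≡ (ℓ : ℤ) [ZMOD 2]) :
    ¬ ∃ a : Fin 4 → Fin 4 → ℕ,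
      (∀ x y, a x y + a y x = μ x y) ∧
      (∀ v : Fin 4, ((∑ y, a v y : ℕ) : ℤ) - ((∑ y, a y v : ℕ) : ℤ) ≡ (ℓ : ℤ) [ZMOD 2 * ℓ]) := by
  rintro ⟨a, ha, hmod⟩
  -- γ v = out minus in degree
  let γ : Fin 4 → ℤ := fun v => ((∑ y, a v y : ℕ) : ℤ) - ((∑ y, a y v : ℕ) : ℤ)
  -- bound |γ v| ≤ 3ℓ - 3
  have hb : ∀ v : Fin 4, γ v ≤ 3 * (ℓ : ℤ) - 3 ∧ -(3 * (ℓ : ℤ) - 3) ≤ γ v := by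
    have e00 := ha 0 0; have e01 := ha 0 1; have e02 := ha 0 2; have e03 := ha 0 3
    have e10 := ha 1 0; have e11 := ha 1 1; have e12 := ha 1 2; have e13 := ha 1 3
    have e20 := ha 2 0; have e21 := ha 2 1; have e22 := ha 2 2; have e23 := ha 2 3
    have e30 := ha 3 0; have e31 := ha 3 1; have e32 := ha 3 2; have e33 := ha 3 3
    have s01 := hsymm 0 1; have s02 := hsymm 0 2; have s03 := hsymm 0 3
    have s12 := hsymm 1 2; have s13 := hsymm 1 3; have s23 := hsymm 2 3
    have l0 := hloop 0; have l1 := hloop 1; have l2 := hloop 2; have l3 := hloop 3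
    simp only [Fin.sum_univ_four] at hedges
    have hb0 : γ 0 ≤ 3 * (ℓ : ℤ) - 3 ∧ -(3 * (ℓ : ℤ) - 3) ≤ γ 0 := by
      simp only [γ, Fin.sum_univ_four]; constructor <;> omega
    have hb1 : γ 1 ≤ 3 * (ℓ : ℤ) - 3 ∧ -(3 * (ℓ : ℤ) - 3) ≤ γ 1 := by
      simp only [γ, Fin.sum_univ_four]; constructor <;> omega
    have hb2 : γ 2 ≤ 3 * (ℓ : ℤ) - 3 ∧ -(3 * (ℓ : ℤ) - 3) ≤ γ 2 := by
      simp only [γ, Fin.sum_univ_four]; constructor <;> omega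
    have hb3 : γ 3 ≤ 3 * (ℓ : ℤ) - 3 ∧ -(3 * (ℓ : ℤ) - 3) ≤ γ 3 := by
      simp only [γ, Fin.sum_univ_four]; constructor <;> omega
    intro v
    fin_cases v
    exacts [hb0, hb1, hb2, hb3]
  -- sum of γ over all vertices is 0
  have hsum : γ 0 + γ 1 + γ 2 + γ 3 = 0 := by
    simp only [γ, Fin.sum_univ_four]
    push_cast
    ring
  -- each γ v equals ℓ or -ℓ
  have hval : ∀ v : Fin 4, γ v = (ℓ : ℤ) ∨ γ v = -(ℓ : ℤ) := by
    intro v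
    have hdvd : (2 * (ℓ : ℤ)) ∣ ((ℓ : ℤ) - γ v) := (hmod v).dvd
    obtain ⟨k, hk⟩ := hdvd
    obtain ⟨hb1, hb2⟩ := hb v
    have hℓ' : (3 : ℤ) ≤ (ℓ : ℤ) := by exact_mod_cast hℓ
    have hk0 : 0 ≤ k := by nlinarith
    have hk1 : k ≤ 1 := by nlinarith
    interval_cases k
    · left; linarith
    · right; linarith
  -- find two distinct vertices with γ = ℓ
  obtain ⟨v, w, hvw, hv, hw⟩ : ∃ v w : Fin 4, v ≠ w ∧ γ v = (ℓ : ℤ) ∧ γ w = (ℓ : ℤ) := by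
    have hℓ' : (3 : ℤ) ≤ (ℓ : ℤ) := by exact_mod_cast hℓ
    rcases hval 0 with h0 | h0 <;> rcases hval 1 with h1 | h1 <;>
      rcases hval 2 with h2 | h2 <;> rcases hval 3 with h3 | h3 <;>
      first
        | exact ⟨0, 1, by decide, h0, h1⟩
        | exact ⟨0, 2, by decide, h0, h2⟩
        | exact ⟨0, 3, by decide, h0, h3⟩
        | exact ⟨1, 2, by decide, h1, h2⟩
        | exact ⟨1, 3, by decide, h1, h3⟩
        | exact ⟨2, 3, by decide, h2, h3⟩
        | (rw [h0, h1, h2, h3] at hsum; linarith)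
  -- the cut inequality
  have hS : ({v, w} : Finset (Fin 4)).card = 2 := Finset.card_pair hvw
  have hc := hcut {v, w} hS
  rw [Finset.sum_pair hvw] at hc
  set f : Fin 4 → ℤ := fun y => (a v y : ℤ) - (a y v : ℤ) + (a w y : ℤ) - (a y w : ℤ) with hf
  have h1 : γ v + γ w = ∑ y, f y := by
    simp only [γ, f, Finset.sum_add_distrib, Finset.sum_sub_distrib]
    push_cast
    ring
  have h2 : ∑ y ∈ ({v, w} : Finset (Fin 4)), f y = 0 := by
    rw [Finset.sum_pair hvw]
    simp only [f]
    ring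
  have h3 : ∑ y, f y = ∑ y ∈ ({v, w} : Finset (Fin 4))ᶜ, f y := by
    rw [← Finset.sum_add_sum_compl ({v, w} : Finset (Fin 4)) f, h2, zero_add]
  have h4 : ∑ y ∈ ({v, w} : Finset (Fin 4))ᶜ, f y
      ≤ ∑ y ∈ ({v, w} : Finset (Fin 4))ᶜ, ((μ v y + μ w y : ℕ) : ℤ) := by
    apply Finset.sum_le_sum
    intro y _
    have hvy := ha v y
    have hwy := ha w y
    simp only [f]
    push_cast
    omega
  have h5 : ∑ y ∈ ({v, w} : Finset (Fin 4))ᶜ, ((μ v y + μ w y : ℕ) : ℤ)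
      = ((2 * ℓ - 2 : ℕ) : ℤ) := by
    rw [← hc]
    push_cast [Finset.sum_add_distrib]
    ring
  have : γ v + γ w ≤ ((2 * ℓ - 2 : ℕ) : ℤ) := by
    rw [h1, h3, ← h5]; exact h4
  rw [hv, hw] at this
  omega
end

section
/- Let ℓ ≥ 3 be an integer, let V be a finite set with a degree function d : V → ℕ, and let β : V → ℤ satisfy 0 ≤ β(v) < 2ℓ and β(v) ≡ d(v) (mod 2) for all v, and Σ_v β(v) ≡ 0 (mod 2ℓ). Then there exists γ : V → ℤ with |γ(v)| ≤ 2ℓ − 1, γ(v) ≡ β(v) (mod 2ℓ) and γ(v) ≡ d(v) (mod 2) for all v, Σ_v γ(v) = 0, and max_v γ(v) − min_v γ(v) ≤ 2ℓ. -/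
theorem stmt_17 {V : Type*} [Fintype V] (ℓ : ℕ) (hℓ : 3 ≤ ℓ)
    (d : V → ℕ) (β : V → ℤ)
    (hβ0 : ∀ v, 0 ≤ β v) (hβ1 : ∀ v, β v < 2 * ℓ)
    (hβpar : ∀ v, β v ≡ (d v : ℤ) [ZMOD 2])
    (hβsum : (∑ v, β v) ≡ 0 [ZMOD 2 * ℓ]) :
    ∃ γ : V → ℤ,
      (∀ v, |γ v| ≤ 2 * ℓ - 1) ∧
      (∀ v, γ v ≡ β v [ZMOD 2 * ℓ]) ∧
      (∀ v, γ v ≡ (d v : ℤ) [ZMOD 2]) ∧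
      (∑ v, γ v = 0) ∧
      (∀ u v, γ u - γ v ≤ 2 * ℓ) := by
  classical
  set n := Fintype.card V with hn
  set e := Fintype.equivFin V with he
  set f : Fin n → ℤ := β ∘ e.symm with hf
  set σ := Tuple.sort f with hσ
  have hmono : Monotone (f ∘ σ) := Tuple.monotone_sort f
  set r : V → Fin n := fun v => σ⁻¹ (e v) with hr
  have hβr : ∀ v, β v = (f ∘ σ) (r v) := by
    intro v
    simp [hf, hr, Function.comp]
  have hrmono : ∀ u v, r u ≤ r v → β u ≤ β v := by
    intro u v h
    rw [hβr u, hβr v]; exact hmono h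
  -- total sum is 2ℓ * k
  have hpos : (0:ℤ) < 2 * ℓ := by positivity
  have hdvd : ((2:ℤ) * ℓ) ∣ ∑ v, β v := (Int.modEq_zero_iff_dvd).mp (by exact_mod_cast hβsum)
  obtain ⟨kz, hkz⟩ := hdvd
  have hkz0 : 0 ≤ kz := by
    have h1 : (0:ℤ) ≤ ∑ v, β v := Finset.sum_nonneg (fun v _ => hβ0 v)
    nlinarith [h1, hkz, hpos]
  set k : ℕ := kz.toNat with hk
  have hkzk : (k : ℤ) = kz := Int.toNat_of_nonneg hkz0
  have hsumβ : ∑ v, β v = 2 * ℓ * k := by rw [hkzk]; exact hkz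
  -- k ≤ n
  have hsum_lt : ∑ v, β v ≤ (2 * ℓ - 1) * n := by
    calc ∑ v, β v ≤ ∑ _v : V, ((2:ℤ) * ℓ - 1) :=
          Finset.sum_le_sum (fun v _ => by linarith [hβ1 v])
      _ = (2 * ℓ - 1) * n := by
          rw [Finset.sum_const, Finset.card_univ]; ring
  have hkn : k ≤ n := by
    by_contra h
    push_neg at h
    have : (n:ℤ) < k := by exact_mod_cast h
    nlinarith [hsumβ, hsum_lt]
  -- define γ
  set S : V → Prop := fun v => n - k ≤ (r v : ℕ) with hS
  set γ : V → ℤ := fun v => β v - (if n - k ≤ (r v : ℕ) then (2 * ℓ : ℤ) else 0) with hγ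
  -- key: if v in S then β v > 0
  have hSpos : ∀ v, n - k ≤ (r v : ℕ) → 0 < β v := by
    intro v hv
    by_contra hb
    push_neg at hb
    have hβv : β v = 0 := le_antisymm hb (hβ0 v)
    -- k ≥ 1
    have hk1 : 1 ≤ k := by
      have := (r v).is_lt
      omega
    -- vertices with rank ≤ rank v have β = 0
    have hT : ∀ u, r u ≤ r v → β u = 0 := by
      intro u hu
      have := hrmono u v hu
      exact le_antisymm (by omega) (hβ0 u)
    -- count
    have hcard : n - k + 1 ≤ ((Finset.univ.filter (fun u => r u ≤ r v)).card : ℕ) := by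
      have hbij : (Finset.univ.filter (fun u => r u ≤ r v)).card
          = (Finset.univ.filter (fun i : Fin n => i ≤ r v)).card := by
        apply Finset.card_bij (fun u _ => r u)
        · intro a ha; simp only [Finset.mem_filter, Finset.mem_univ, true_and] at *; exact ha
        · intro a ha b hb hab
          have : σ⁻¹ (e a) = σ⁻¹ (e b) := hab
          have := σ⁻¹.injective this
          exact e.injective this
        · intro i hi
          refine ⟨e.symm (σ i), Finset.mem_filter.mpr ⟨Finset.mem_univ _, ?_⟩, ?_⟩
          · simp only [Finset.mem_filter, Finset.mem_univ, true_and] at hi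
            simpa [hr] using hi
          · simp [hr]
      rw [hbij]
      have : (Finset.univ.filter (fun i : Fin n => i ≤ r v)).card = (r v : ℕ) + 1 := by
        rw [show (Finset.univ.filter (fun i : Fin n => i ≤ r v)) = Finset.Iic (r v) by
          ext i; simp]
        simp [Fin.card_Iic]
      omega
    -- sum bound
    have hsum0 : ∑ v, β v ≤ (2 * ℓ - 1) * (k - 1 : ℤ) := by
      have hsplit : ∑ u, β u = ∑ u ∈ Finset.univ.filter (fun u => ¬ (r u ≤ r v)), β u := by
        rw [← Finset.sum_filter_add_sum_filter_not Finset.univ (fun u => r u ≤ r v) β]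
        rw [Finset.sum_congr rfl (fun u hu => hT u (Finset.mem_filter.mp hu).2)]
        simp
      rw [hsplit]
      have hcard2 : ((Finset.univ.filter (fun u => ¬ (r u ≤ r v))).card : ℕ) ≤ k - 1 := by
        have := Finset.card_filter_add_card_filter_not
          (s := Finset.univ) (p := fun u => r u ≤ r v)
        rw [Finset.card_univ] at this
        omega
      calc ∑ u ∈ Finset.univ.filter (fun u => ¬ (r u ≤ r v)), β u
          ≤ ∑ _u ∈ Finset.univ.filter (fun u => ¬ (r u ≤ r v)), ((2:ℤ) * ℓ - 1) :=
            Finset.sum_le_sum (fun u _ => by linarith [hβ1 u])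
        _ = ((Finset.univ.filter (fun u => ¬ (r u ≤ r v))).card : ℤ) * (2 * ℓ - 1) := by
            rw [Finset.sum_const]; ring
        _ ≤ (2 * ℓ - 1) * (k - 1 : ℤ) := by
            have : ((Finset.univ.filter (fun u => ¬ (r u ≤ r v))).card : ℤ) ≤ (k : ℤ) - 1 := by
              exact_mod_cast by
                have := hcard2
                omega
            nlinarith [this]
    rw [hsumβ] at hsum0
    have hk1' : (1:ℤ) ≤ k := by exact_mod_cast hk1
    nlinarith [hsum0, hk1']
  refine ⟨γ, ?_, ?_, ?_, ?_, ?_⟩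
  · intro v
    simp only [hγ]
    by_cases h : n - k ≤ (r v : ℕ)
    · have := hSpos v h
      have hl : (3:ℤ) ≤ ℓ := by exact_mod_cast hℓ
      rw [if_pos h, abs_le]
      constructor <;> linarith [hβ1 v, this, hl]
    · rw [if_neg h]
      simp only [sub_zero]
      rw [abs_le]
      constructor <;> [linarith [hβ0 v]; linarith [hβ1 v]]
  · intro v
    simp only [hγ]
    by_cases h : n - k ≤ (r v : ℕ)
    · rw [if_pos h]
      have : β v - 2 * (ℓ:ℤ) = β v + (-1) * (2 * ℓ) := by ring
      rw [this]
      exact (Int.add_mul_emod_self_right (a := β v) (b := -1) (c := 2 * ℓ))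
    · rw [if_neg h]; simp [Int.ModEq]
  · intro v
    simp only [hγ]
    have h2 : (2:ℤ) ∣ (if n - k ≤ (r v : ℕ) then 2 * (ℓ:ℤ) else 0) := by
      split <;> simp [dvd_mul_right]
    calc β v - (if n - k ≤ (r v : ℕ) then 2 * (ℓ:ℤ) else 0)
        ≡ β v - 0 [ZMOD 2] := Int.ModEq.sub (Int.ModEq.refl _)
          ((Int.modEq_zero_iff_dvd).mpr h2)
      _ = β v := by ring
      _ ≡ (d v : ℤ) [ZMOD 2] := hβpar v
  · simp only [hγ]
    rw [Finset.sum_sub_distrib, hsumβ]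
    have : ∑ v : V, (if n - k ≤ ((r v : Fin n) : ℕ) then (2 * ℓ : ℤ) else 0)
        = ∑ i : Fin n, (if n - k ≤ (i : ℕ) then (2 * ℓ : ℤ) else 0) := by
      apply Fintype.sum_equiv (e.trans (σ⁻¹ : Equiv.Perm (Fin n)))
      intro v
      simp [hr]
    rw [this]
    rw [Fin.sum_univ_eq_sum_range (fun i => if n - k ≤ i then (2 * ℓ : ℤ) else 0)]
    rw [← Finset.sum_filter]
    have hfil : (Finset.range n).filter (fun i => n - k ≤ i) = Finset.Ico (n - k) n := by
      ext i; simp [Finset.mem_Ico, and_comm]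
    rw [hfil, Finset.sum_const, Nat.card_Ico]
    have : n - (n - k) = k := by omega
    rw [this]
    push_cast
    ring
  · intro u v
    simp only [hγ]
    by_cases hu : n - k ≤ (r u : ℕ) <;> by_cases hv : n - k ≤ (r v : ℕ)
    · rw [if_pos hu, if_pos hv]
      linarith [hβ1 u, hβ0 v]
    · rw [if_pos hu, if_neg hv]
      linarith [hβ1 u, hβ0 v]
    · rw [if_neg hu, if_pos hv]
      have : r u ≤ r v := by
        have := Fin.is_lt (r u); have := Fin.is_lt (r v)
        exact Fin.le_def.mpr (by omega)
      have := hrmono u v this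
      linarith
    · rw [if_neg hu, if_neg hv]
      linarith [hβ1 u, hβ0 v]
end

section
/- Let ℓ ≥ 3 and let a, b, c be nonnegative integers (the multiplicities of a triangle multigraph T_{a,b,c}). If a + b + c ≥ 2ℓ − 2 and every vertex degree is at least ℓ − 1 (i.e., a + b ≥ ℓ − 1, b + c ≥ ℓ − 1, a + c ≥ ℓ − 1), then for every triple (β₀, β₁, β₂) of residues mod 2ℓ with βᵢ ≡ (sum of the two multiplicities at vertex i) mod 2 and β₀ + β₁ + β₂ ≡ 0 (mod 2ℓ), there exist integers x₀, x₁, x₂ with |xᵢ| ≤ μᵢ, xᵢ ≡ μᵢ (mod 2) (where μ₀ = a, μ₁ = b, μ₂ = c are the multiplicities of edges [v₀v₁], [v₁v₂], [v₂v₀]), satisfying xᵢ − xᵢ₋₁ ≡ βᵢ (mod 2ℓ) for i = 0, 1, 2 (indices mod 3). -/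
/-!
Write `x₀ = a - 2i`, `x₁ = b - 2j`, `x₂ = c - 2k` with `i ≤ a`, `j ≤ b`, `k ≤ c`. By the parity
conditions, `β₁ = b - a + 2u₁` and `β₀ = a - c + 2u₀`, and the first two congruences modulo `2ℓ`
become `i - j ≡ u₁` and `k - i ≡ u₀` modulo `ℓ`; the third one follows from `β₀ + β₁ + β₂ ≡ 0`.
In `ZMod ℓ` the windows `{0, …, a}`, `{0, …, b}`, `{0, …, c}` have at least `min (a + 1) ℓ`, … elements,
and the degree conditions make these sizes sum to more than `2ℓ`, so suitable translates of the
three windows meet.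
-/

open Finset

theorem Finset.inter_inter_nonempty_of_two_mul_card_lt {α : Type*} [Fintype α] [DecidableEq α]
    {s t u : Finset α} (h : 2 * Fintype.card α < #s + #t + #u) : (s ∩ t ∩ u).Nonempty := by
  have hst := card_union_add_card_inter s t
  have hstu := card_union_add_card_inter (s ∩ t) u
  have := card_le_univ (s ∪ t)
  have := card_le_univ (s ∩ t ∪ u)
  rw [← card_pos]
  omega

theorem ZMod.min_le_card_image_natCast_range (n m : ℕ) :
    min m n ≤ #((range m).image (Nat.cast : ℕ → ZMod n)) :=
  calc min m n = #((range (min m n)).image (Nat.cast : ℕ → ZMod n)) := by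
        rw [card_image_of_injOn, card_range]
        intro x hx y hy hxy
        simp only [coe_range, Set.mem_Iio, lt_min_iff] at hx hy
        simpa [ZMod.val_natCast_of_lt hx.2, ZMod.val_natCast_of_lt hy.2] using
          congrArg ZMod.val hxy
    _ ≤ _ := card_le_card (image_subset_image (range_subset_range.2 (min_le_left _ _)))

theorem ZMod.exists_natCast_sub_eq_and_natCast_sub_eq {n : ℕ} [NeZero n] (a b c : ℕ)
    (u v : ZMod n) (h : 2 * n < min (a + 1) n + min (b + 1) n + min (c + 1) n) :
    ∃ i ≤ a, ∃ j ≤ b, ∃ k ≤ c, (i - j : ZMod n) = u ∧ (k - i : ZMod n) = v := by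
  let window (m : ℕ) : Finset (ZMod n) := (range (m + 1)).image Nat.cast
  obtain ⟨x, hx⟩ := inter_inter_nonempty_of_two_mul_card_lt (s := window a)
    (t := (window b).map (Equiv.addRight u).toEmbedding)
    (u := (window c).map (Equiv.subRight v).toEmbedding) <| by
      simp only [window, card_map, ZMod.card]
      have := min_le_card_image_natCast_range n (a + 1)
      have := min_le_card_image_natCast_range n (b + 1)
      have := min_le_card_image_natCast_range n (c + 1)
      omega
  simp only [window, mem_inter, mem_image, mem_map_equiv, mem_range, Nat.lt_succ_iff] at hx
  obtain ⟨⟨⟨i, hi, rfl⟩, j, hj, hju⟩, k, hk, hkv⟩ := hx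
  refine ⟨i, hi, j, hj, k, hk, ?_, ?_⟩
  · simp [hju]
  · simp [hkv]

theorem stmt_18_general (ℓ a b c : ℕ) (hℓ : 3 ≤ ℓ)
    (hsum : 2 * ℓ - 2 ≤ a + b + c)
    (hd0 : ℓ - 1 ≤ a + c) (hd1 : ℓ - 1 ≤ a + b) (hd2 : ℓ - 1 ≤ b + c)
    (β₀ β₁ β₂ : ℤ)
    (hβ0 : β₀ ≡ ((a : ℤ) + c) [ZMOD 2])
    (hβ1 : β₁ ≡ ((a : ℤ) + b) [ZMOD 2])
    (hβsum : β₀ + β₁ + β₂ ≡ 0 [ZMOD 2 * ℓ]) :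
    ∃ x₀ x₁ x₂ : ℤ,
      |x₀| ≤ a ∧ x₀ ≡ (a : ℤ) [ZMOD 2] ∧
      |x₁| ≤ b ∧ x₁ ≡ (b : ℤ) [ZMOD 2] ∧
      |x₂| ≤ c ∧ x₂ ≡ (c : ℤ) [ZMOD 2] ∧
      x₀ - x₂ ≡ β₀ [ZMOD 2 * ℓ] ∧
      x₁ - x₀ ≡ β₁ [ZMOD 2 * ℓ] ∧
      x₂ - x₁ ≡ β₂ [ZMOD 2 * ℓ] := by
  obtain ⟨u₀, hu₀⟩ : ∃ u : ℤ, β₀ = a - c + 2 * u :=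
    ⟨(β₀ - a + c) / 2, by unfold Int.ModEq at hβ0; omega⟩
  obtain ⟨u₁, hu₁⟩ : ∃ u : ℤ, β₁ = b - a + 2 * u :=
    ⟨(β₁ - b + a) / 2, by unfold Int.ModEq at hβ1; omega⟩
  have : NeZero ℓ := ⟨by omega⟩
  have hsize : 2 * ℓ < min (a + 1) ℓ + min (b + 1) ℓ + min (c + 1) ℓ := by omega
  obtain ⟨i, hi, j, hj, k, hk, hij, hki⟩ :=
    ZMod.exists_natCast_sub_eq_and_natCast_sub_eq a b c (u₁ : ZMod ℓ) (u₀ : ZMod ℓ) hsize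
  have hij' : 2 * ((i : ℤ) - j) ≡ 2 * u₁ [ZMOD 2 * ℓ] :=
    ((ZMod.intCast_eq_intCast_iff _ _ _).1 (by push_cast; exact hij)).mul_left'
  have hki' : 2 * ((k : ℤ) - i) ≡ 2 * u₀ [ZMOD 2 * ℓ] :=
    ((ZMod.intCast_eq_intCast_iff _ _ _).1 (by push_cast; exact hki)).mul_left'
  have h₀ : (a - 2 * i : ℤ) - (c - 2 * k) ≡ β₀ [ZMOD 2 * ℓ] := by
    rw [hu₀]; convert hki'.add_left (a - c : ℤ) using 1; ring
  have h₁ : (b - 2 * j : ℤ) - (a - 2 * i) ≡ β₁ [ZMOD 2 * ℓ] := by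
    rw [hu₁]; convert hij'.add_left (b - a : ℤ) using 1; ring
  refine ⟨a - 2 * i, b - 2 * j, c - 2 * k, by rw [abs_le]; omega, ?_, by rw [abs_le]; omega, ?_,
    by rw [abs_le]; omega, ?_, h₀, h₁, ?_⟩
  · exact Int.modEq_iff_dvd.2 ⟨i, by ring⟩
  · exact Int.modEq_iff_dvd.2 ⟨j, by ring⟩
  · exact Int.modEq_iff_dvd.2 ⟨k, by ring⟩
  · calc (c - 2 * k : ℤ) - (b - 2 * j)
        = -((a - 2 * i - (c - 2 * k)) + (b - 2 * j - (a - 2 * i))) := by ring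
      _ ≡ -(β₀ + β₁) [ZMOD 2 * ℓ] := (h₀.add h₁).neg
      _ ≡ β₂ [ZMOD 2 * ℓ] := Int.ModEq.add_left_cancel' (β₀ + β₁) <| by
        rw [add_neg_cancel]; exact hβsum.symm

theorem stmt_18 (ℓ a b c : ℕ) (hℓ : 3 ≤ ℓ)
    (hsum : 2 * ℓ - 2 ≤ a + b + c)
    (hd0 : ℓ - 1 ≤ a + c) (hd1 : ℓ - 1 ≤ a + b) (hd2 : ℓ - 1 ≤ b + c)
    (β₀ β₁ β₂ : ℤ)
    (hβ0 : β₀ ≡ ((a : ℤ) + c) [ZMOD 2])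
    (hβ1 : β₁ ≡ ((a : ℤ) + b) [ZMOD 2])
    (hβ2 : β₂ ≡ ((b : ℤ) + c) [ZMOD 2])
    (hβsum : β₀ + β₁ + β₂ ≡ 0 [ZMOD 2 * ℓ]) :
    ∃ x₀ x₁ x₂ : ℤ,
      |x₀| ≤ a ∧ x₀ ≡ (a : ℤ) [ZMOD 2] ∧
      |x₁| ≤ b ∧ x₁ ≡ (b : ℤ) [ZMOD 2] ∧
      |x₂| ≤ c ∧ x₂ ≡ (c : ℤ) [ZMOD 2] ∧
      x₀ - x₂ ≡ β₀ [ZMOD 2 * ℓ] ∧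
      x₁ - x₀ ≡ β₁ [ZMOD 2 * ℓ] ∧
      x₂ - x₁ ≡ β₂ [ZMOD 2 * ℓ] :=
  stmt_18_general ℓ a b c hℓ hsum hd0 hd1 hd2 β₀ β₁ β₂ hβ0 hβ1 hβsum
end
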